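/- arXiv:math/0510631 — 2 statements merged into one kernel-verified Lean document; each statement's English description precedes it below -/
import Mathlib

section
/- Let Γ = A *_C B and let x, y ∈ Γ be commuting elements. If neither x nor y lies in a conjugate of C, and x lies in a conjugate g F g^{-1} of a factor F ∈ {A, B}, then y lies in the same conjugate g F g^{-1} of the same factor. -/
/-!
Internal characterization of the amalgamated free product `Γ = A *_C B`:
`A` and `B` are subgroups of `Γ` generating `Γ`, the amalgamated subgroup is
`C = A ⊓ B`, and (normal form theorem) the product of any nonempty reduced
sequence is nontrivial.
-/

variable {Γ : Type*} [Group Γ]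

/-- `x` and `y` lie in different factors among `A`, `B`. -/
def DiffFactors (A B : Subgroup Γ) (x y : Γ) : Prop :=
  ¬(x ∈ A ∧ y ∈ A) ∧ ¬(x ∈ B ∧ y ∈ B)

/-- A reduced sequence: every entry lies in `(A ∪ B) \ (A ⊓ B)` and consecutive
entries lie in different factors. -/
def ReducedSeq (A B : Subgroup Γ) (l : List Γ) : Prop :=
  (∀ g ∈ l, (g ∈ A ∨ g ∈ B) ∧ ¬(g ∈ A ∧ g ∈ B)) ∧ l.Chain' (DiffFactors A B)

/-- `Γ` is the amalgamated free product of its subgroups `A` and `B`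
along `C = A ⊓ B`. -/
def IsAmalgam (A B : Subgroup Γ) : Prop :=
  A ⊔ B = ⊤ ∧ ∀ l : List Γ, ReducedSeq A B l → l ≠ [] → l.prod ≠ 1

/-- `g` is cyclically reduced: it has length 1 (it lies in a factor), or it has
a reduced form of length `≥ 2` whose first and last entries lie in different
factors. -/
def AmCyclicallyReduced (A B : Subgroup Γ) (g : Γ) : Prop :=
  (g ∈ A ∨ g ∈ B) ∨
    ∃ l : List Γ, ReducedSeq A B l ∧ l.prod = g ∧ 2 ≤ l.length ∧
      ∃ x y, l.head? = some x ∧ l.getLast? = some y ∧ DiffFactors A B x y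

/-!
Conjugating by `g` reduces to `g = 1`, and exchanging `A` and `B` to the factor `A`.
If `y ∉ A`, write `y = a * p` with `a ∈ A` and `p` the product of a nonempty reduced
sequence whose first letter lies in `B \ A`. Since `x` is not conjugate into `C`,
`x₁ = a⁻¹ * x * a` lies in `A \ B`, so `p⁻¹ * x₁ * p` is the product of a reduced sequence
of length at least three and, by the normal form theorem, does not lie in `A`. But
commutation gives `p⁻¹ * x₁ * p = y⁻¹ * x * y = x ∈ A`.
-/

variable {A B : Subgroup Γ} {x y : Γ}

theorem DiffFactors.symm (h : DiffFactors A B x y) : DiffFactors A B y x :=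
  ⟨fun ⟨hx, hy⟩ => h.1 ⟨hy, hx⟩, fun ⟨hx, hy⟩ => h.2 ⟨hy, hx⟩⟩

theorem DiffFactors.swap (h : DiffFactors A B x y) : DiffFactors B A x y :=
  ⟨h.2, h.1⟩

@[simp]
theorem diffFactors_inv_left : DiffFactors A B x⁻¹ y ↔ DiffFactors A B x y := by
  simp only [DiffFactors, inv_mem_iff]

@[simp]
theorem diffFactors_inv_right : DiffFactors A B x y⁻¹ ↔ DiffFactors A B x y := by
  simp only [DiffFactors, inv_mem_iff]

theorem reducedSeq_iff {l : List Γ} :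
    ReducedSeq A B l ↔
      (∀ g ∈ l, (g ∈ A ∨ g ∈ B) ∧ ¬(g ∈ A ∧ g ∈ B)) ∧ l.IsChain (DiffFactors A B) :=
  Iff.rfl

theorem ReducedSeq.swap {l : List Γ} (h : ReducedSeq A B l) : ReducedSeq B A l :=
  ⟨fun g hg => ⟨(h.1 g hg).1.symm, fun ⟨hB, hA⟩ => (h.1 g hg).2 ⟨hA, hB⟩⟩,
    h.2.imp fun _ _ => DiffFactors.swap⟩

theorem IsAmalgam.swap (h : IsAmalgam A B) : IsAmalgam B A :=
  ⟨sup_comm A B ▸ h.1, fun l hl => h.2 l hl.swap⟩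

theorem ReducedSeq.tail {g : Γ} {t : List Γ} (h : ReducedSeq A B (g :: t)) :
    ReducedSeq A B t :=
  ⟨fun x hx => h.1 x (List.mem_cons_of_mem _ hx), h.2.tail⟩

theorem ReducedSeq.cons {g h : Γ} {t : List Γ} (hl : ReducedSeq A B (h :: t))
    (hg : (g ∈ A ∨ g ∈ B) ∧ ¬(g ∈ A ∧ g ∈ B)) (hgh : DiffFactors A B g h) :
    ReducedSeq A B (g :: h :: t) :=
  ⟨List.forall_mem_cons.2 ⟨hg, hl.1⟩, List.isChain_cons_cons.2 ⟨hgh, hl.2⟩⟩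

theorem ReducedSeq.replace_head {g g' : Γ} {t : List Γ} (h : ReducedSeq A B (g :: t))
    (hA : g' ∈ A ↔ g ∈ A) (hB : g' ∈ B ↔ g ∈ B) : ReducedSeq A B (g' :: t) := by
  obtain ⟨hmem, hchain⟩ := reducedSeq_iff.1 h
  rw [List.forall_mem_cons] at hmem
  rw [reducedSeq_iff, List.forall_mem_cons, List.isChain_cons]
  rw [List.isChain_cons] at hchain
  refine ⟨⟨?_, hmem.2⟩, fun y hy => ?_, hchain.2⟩
  · rw [hA, hB]
    exact hmem.1
  · have := hchain.1 y hy
    exact ⟨by rw [hA]; exact this.1, by rw [hB]; exact this.2⟩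

theorem ReducedSeq.map_inv_reverse {l : List Γ} (h : ReducedSeq A B l) :
    ReducedSeq A B (l.map (·⁻¹)).reverse := by
  refine reducedSeq_iff.2 ⟨fun g hg => ?_, ?_⟩
  · obtain ⟨g', hg', rfl⟩ := List.mem_map.1 (List.mem_reverse.1 hg)
    simpa only [inv_mem_iff] using h.1 g' hg'
  · rw [List.isChain_reverse, List.isChain_map]
    exact h.2.imp fun _ _ hd => by simpa using hd.symm

theorem ReducedSeq.mul_prod_of_mem_left {h : Γ} {t : List Γ} (hx : x ∈ A)
    (hl : ReducedSeq A B (h :: t)) :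
    (x * h ∈ A ⊓ B ∧ t = []) ∨
      ∃ l, ReducedSeq A B l ∧ l ≠ [] ∧ l.prod = x * (h :: t).prod := by
  obtain ⟨hAorB, hnotC⟩ := hl.1 h List.mem_cons_self
  by_cases hA : h ∈ A
  · have hB : h ∉ B := fun hB => hnotC ⟨hA, hB⟩
    by_cases hxhB : x * h ∈ B
    · cases t with
      | nil => exact Or.inl ⟨Subgroup.mem_inf.2 ⟨mul_mem hx hA, hxhB⟩, rfl⟩
      | cons h₂ t =>
        have hxhA : x * h ∈ A := mul_mem hx hA
        refine Or.inr ⟨(x * h * h₂) :: t, hl.tail.replace_head (mul_mem_cancel_left hxhA)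
          (mul_mem_cancel_left hxhB), List.cons_ne_nil _ _, ?_⟩
        simp only [List.prod_cons, mul_assoc]
    · refine Or.inr ⟨(x * h) :: t, hl.replace_head (mul_mem_cancel_left hx)
        (iff_of_false hxhB hB), List.cons_ne_nil _ _, by simp only [List.prod_cons, mul_assoc]⟩
  · have hB : h ∈ B := hAorB.resolve_left hA
    by_cases hxB : x ∈ B
    · exact Or.inr ⟨(x * h) :: t, hl.replace_head (mul_mem_cancel_left hx)
        (mul_mem_cancel_left hxB), List.cons_ne_nil _ _, by simp only [List.prod_cons, mul_assoc]⟩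
    · exact Or.inr ⟨x :: h :: t,
        hl.cons ⟨Or.inl hx, fun hxC => hxB hxC.2⟩ ⟨fun H => hA H.2, fun H => hxB H.1⟩,
        List.cons_ne_nil _ _, rfl⟩

theorem ReducedSeq.mul_prod_of_mem {h : Γ} {t : List Γ} (hx : x ∈ A ∨ x ∈ B)
    (hl : ReducedSeq A B (h :: t)) :
    (x * h ∈ A ⊓ B ∧ t = []) ∨
      ∃ l, ReducedSeq A B l ∧ l ≠ [] ∧ l.prod = x * (h :: t).prod := by
  rcases hx with hx | hx
  · exact hl.mul_prod_of_mem_left hx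
  · rw [inf_comm]
    exact (hl.swap.mul_prod_of_mem_left hx).imp_right
      fun ⟨l, hl', hne, hprod⟩ => ⟨l, hl'.swap, hne, hprod⟩

def HasReducedForm (A B : Subgroup Γ) (g : Γ) : Prop :=
  g ∈ A ⊓ B ∨ ∃ l, ReducedSeq A B l ∧ l ≠ [] ∧ l.prod = g

theorem hasReducedForm_of_mem (hx : x ∈ A ∨ x ∈ B) : HasReducedForm A B x := by
  by_cases hC : x ∈ A ∧ x ∈ B
  · exact Or.inl (Subgroup.mem_inf.2 hC)
  · refine Or.inr ⟨[x], ⟨?_, List.isChain_singleton x⟩, List.cons_ne_nil _ _,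
      List.prod_singleton⟩
    simpa only [List.mem_singleton, forall_eq] using ⟨hx, hC⟩

theorem HasReducedForm.mul_left (hx : x ∈ A ∨ x ∈ B) (hy : HasReducedForm A B y) :
    HasReducedForm A B (x * y) := by
  rcases hy with hyC | ⟨l, hl, hne, rfl⟩
  · rw [Subgroup.mem_inf] at hyC
    exact hasReducedForm_of_mem (hx.imp (mul_mem · hyC.1) (mul_mem · hyC.2))
  · obtain ⟨h, t, rfl⟩ := List.exists_cons_of_ne_nil hne
    rcases hl.mul_prod_of_mem hx with ⟨hxh, rfl⟩ | ⟨l, hl, hne, hprod⟩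
    · exact Or.inl (by simpa only [List.prod_singleton] using hxh)
    · exact Or.inr ⟨l, hl, hne, hprod⟩

theorem hasReducedForm_of_sup_eq_top (hAB : A ⊔ B = ⊤) (g : Γ) : HasReducedForm A B g := by
  have hg : g ∈ Subgroup.closure ((A : Set Γ) ∪ B) := by
    rw [← Subgroup.sup_eq_closure, hAB]
    exact Subgroup.mem_top g
  induction hg using Subgroup.closure_induction_left with
  | one => exact Or.inl (one_mem _)
  | mul_left x hx y _ ih => exact ih.mul_left hx
  | inv_mul_cancel x hx y _ ih => exact ih.mul_left (hx.imp inv_mem inv_mem)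

theorem IsAmalgam.prod_not_mem_left (hAB : IsAmalgam A B) {l : List Γ} (hl : ReducedSeq A B l)
    (hlen : 2 ≤ l.length) : l.prod ∉ A := by
  intro hprod
  obtain ⟨h, t, rfl⟩ :=
    List.exists_cons_of_ne_nil (List.ne_nil_of_length_pos (by omega : 0 < l.length))
  rcases hl.mul_prod_of_mem (Or.inl (inv_mem hprod)) with ⟨-, rfl⟩ | ⟨l', hl', hne, hprod'⟩
  · simp at hlen
  · exact hAB.2 l' hl' hne (by rw [hprod', inv_mul_cancel])

theorem ReducedSeq.conj {l : List Γ} {a : Γ} (hl : ReducedSeq A B l)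
    (ha : (a ∈ A ∨ a ∈ B) ∧ ¬(a ∈ A ∧ a ∈ B)) (hhead : ∀ h ∈ l.head?, DiffFactors A B a h) :
    ReducedSeq A B ((l.map (·⁻¹)).reverse ++ a :: l) := by
  have hinv := hl.map_inv_reverse
  refine reducedSeq_iff.2 ⟨fun g hg => ?_, ?_⟩
  · rcases List.mem_append.1 hg with hg | hg
    · exact hinv.1 g hg
    · rcases List.mem_cons.1 hg with rfl | hg
      exacts [ha, hl.1 g hg]
  · rw [List.isChain_append, List.isChain_cons]
    refine ⟨hinv.2, ⟨hhead, hl.2⟩, fun g hg a' ha' => ?_⟩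
    rw [List.getLast?_reverse, List.head?_map, Option.mem_map] at hg
    obtain ⟨h, hh, rfl⟩ := hg
    obtain rfl : a' = a := by simpa using ha'.symm
    simpa using (hhead h hh).symm

theorem prod_map_inv_reverse_append (l : List Γ) (a : Γ) :
    ((l.map (·⁻¹)).reverse ++ a :: l).prod = l.prod⁻¹ * a * l.prod := by
  rw [List.prod_append, List.prod_cons, ← List.prod_inv_reverse, mul_assoc]

theorem IsAmalgam.inv_mul_mul_prod_not_mem_left (hAB : IsAmalgam A B) {l : List Γ} {a : Γ}
    (hl : ReducedSeq A B l) (hne : l ≠ []) (haA : a ∈ A) (haB : a ∉ B)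
    (hhead : ∀ h ∈ l.head?, h ∉ A) : l.prod⁻¹ * a * l.prod ∉ A := by
  rw [← prod_map_inv_reverse_append]
  refine hAB.prod_not_mem_left (hl.conj ⟨Or.inl haA, fun H => haB H.2⟩
    fun h hh => ⟨fun H => hhead h hh H.2, fun H => haB H.1⟩) ?_
  have := List.length_pos_iff.2 hne
  simp only [List.length_append, List.length_reverse, List.length_map, List.length_cons]
  omega

theorem exists_mul_prod_of_not_mem_left (hAB : A ⊔ B = ⊤) (hy : y ∉ A) :
    ∃ a ∈ A, ∃ l, ReducedSeq A B l ∧ l ≠ [] ∧ (∀ h ∈ l.head?, h ∉ A) ∧ y = a * l.prod := by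
  rcases hasReducedForm_of_sup_eq_top hAB y with hyC | ⟨l, hl, hne, rfl⟩
  · exact absurd (Subgroup.mem_inf.1 hyC).1 hy
  obtain ⟨h, t, rfl⟩ := List.exists_cons_of_ne_nil hne
  by_cases hA : h ∈ A
  · obtain ⟨h₂, t, rfl⟩ : ∃ h₂ t', t = h₂ :: t' := by
      cases t with
      | nil => exact absurd (by simpa using hA) hy
      | cons h₂ t' => exact ⟨h₂, t', rfl⟩
    refine ⟨h, hA, h₂ :: t, hl.tail, List.cons_ne_nil _ _, ?_, List.prod_cons⟩
    simpa using fun H => (List.isChain_cons_cons.1 hl.2).1.1 ⟨hA, H⟩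
  · exact ⟨1, one_mem A, h :: t, hl, hne, by simpa using hA, (one_mul _).symm⟩

theorem IsAmalgam.mem_left_of_commute (hAB : IsAmalgam A B) (hcomm : x * y = y * x)
    (hxC : ∀ k : Γ, ¬∃ c ∈ A ⊓ B, x = k * c * k⁻¹) (hx : x ∈ A) : y ∈ A := by
  by_contra hy
  obtain ⟨a, haA, l, hl, hne, hhead, rfl⟩ := exists_mul_prod_of_not_mem_left hAB.1 hy
  have hx₁A : a⁻¹ * x * a ∈ A := mul_mem (mul_mem (inv_mem haA) hx) haA
  have hx₁B : a⁻¹ * x * a ∉ B := fun hB =>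
    hxC a ⟨_, Subgroup.mem_inf.2 ⟨hx₁A, hB⟩, by group⟩
  have hconj : l.prod⁻¹ * (a⁻¹ * x * a) * l.prod = x :=
    calc l.prod⁻¹ * (a⁻¹ * x * a) * l.prod = (a * l.prod)⁻¹ * (x * (a * l.prod)) := by group
      _ = x := by rw [hcomm, inv_mul_cancel_left]
  exact hAB.inv_mul_mul_prod_not_mem_left hl hne hx₁A hx₁B hhead (hconj.symm ▸ hx)

theorem IsAmalgam.mem_conj_of_commute (hAB : IsAmalgam A B) (hcomm : x * y = y * x)
    (hxC : ∀ k : Γ, ¬∃ c ∈ A ⊓ B, x = k * c * k⁻¹) (g : Γ) (hx : ∃ a ∈ A, x = g * a * g⁻¹) :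
    ∃ a ∈ A, y = g * a * g⁻¹ := by
  obtain ⟨a, haA, rfl⟩ := hx
  refine ⟨g⁻¹ * y * g, hAB.mem_left_of_commute (x := a) ?_ ?_ haA, by group⟩
  · calc a * (g⁻¹ * y * g) = g⁻¹ * (g * a * g⁻¹ * y) * g := by group
      _ = g⁻¹ * (y * (g * a * g⁻¹)) * g := by rw [hcomm]
      _ = g⁻¹ * y * g * a := by group
  · rintro k ⟨c, hc, rfl⟩
    exact hxC (g * k) ⟨c, hc, by group⟩

theorem amalgam_commute_same_conjugate_factor_general (A B : Subgroup Γ)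
    (hAB : IsAmalgam A B) (x y : Γ) (hcomm : x * y = y * x)
    (hxC : ∀ g : Γ, ¬∃ c ∈ A ⊓ B, x = g * c * g⁻¹)
    (g : Γ) :
    ((∃ a ∈ A, x = g * a * g⁻¹) → ∃ a ∈ A, y = g * a * g⁻¹) ∧
    ((∃ b ∈ B, x = g * b * g⁻¹) → ∃ b ∈ B, y = g * b * g⁻¹) :=
  ⟨hAB.mem_conj_of_commute hcomm hxC g,
    hAB.swap.mem_conj_of_commute hcomm (by rwa [inf_comm] at hxC) g⟩

/-- Commutativity theorem in an amalgam, case (ii): if `x` and `y` commute,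
neither lies in a conjugate of `C = A ⊓ B`, and `x` lies in a conjugate
`g F g⁻¹` of a factor `F ∈ {A, B}`, then `y` lies in the same conjugate of the
same factor. -/
theorem amalgam_commute_same_conjugate_factor (A B : Subgroup Γ)
    (hAB : IsAmalgam A B) (x y : Γ) (hcomm : x * y = y * x)
    (hxC : ∀ g : Γ, ¬∃ c ∈ A ⊓ B, x = g * c * g⁻¹)
    (hyC : ∀ g : Γ, ¬∃ c ∈ A ⊓ B, y = g * c * g⁻¹)
    (g : Γ) :
    ((∃ a ∈ A, x = g * a * g⁻¹) → ∃ a ∈ A, y = g * a * g⁻¹) ∧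
    ((∃ b ∈ B, x = g * b * g⁻¹) → ∃ b ∈ B, y = g * b * g⁻¹) :=
  amalgam_commute_same_conjugate_factor_general A B hAB x y hcomm hxC g
end

section
/- Let Γ = A*_φ. If C_{-1} is a proper subgroup of A or C_{+1} is a proper subgroup of A, then the center of Γ equals Z(A) ∩ Fix φ. -/
/-!
Internal characterization of the HNN extension `Γ = A*_φ`:
`A` is a subgroup of `Γ`, `t ∈ Γ` is the stable letter, `Cm = C_{-1}` and
`Cp = C_{+1}` are subgroups of `A` with `t⁻¹ Cm t = Cp` (so
`φ(c) = t⁻¹ c t` for `c ∈ Cm`), `A ∪ {t}` generates `Γ`, and Britton's lemma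
holds: a reduced word `g₀ t^{ε₁} g₁ ⋯ t^{εₙ} gₙ` with `n ≥ 1` is nontrivial.
-/

variable {Γ : Type*} [Group Γ]

/-- The subgroup `C_ε` : `C_{+1} = Cp` when `ε = 1`, and `C_{-1} = Cm`
otherwise. -/
def toCsub (Cm Cp : Subgroup Γ) (ε : ℤ) : Subgroup Γ := if ε = 1 then Cp else Cm

/-- The pair `(g₀, [(ε₁, g₁), …, (εₙ, gₙ)])` encodes the word
`g₀ t^{ε₁} g₁ ⋯ t^{εₙ} gₙ`; it is reduced when all `gᵢ ∈ A`, all `εᵢ = ±1`,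
and it contains no pinch `t^{εᵢ} gᵢ t^{-εᵢ}` with `gᵢ ∈ C_{εᵢ}`. -/
def HNNReducedWord (A Cm Cp : Subgroup Γ) (g₀ : Γ) (w : List (ℤ × Γ)) : Prop :=
  g₀ ∈ A ∧ (∀ p ∈ w, (p.1 = 1 ∨ p.1 = -1) ∧ p.2 ∈ A) ∧
    w.Chain' fun p q => q.1 = -p.1 → p.2 ∉ toCsub Cm Cp p.1

/-- The element of `Γ` represented by the word
`g₀ t^{ε₁} g₁ ⋯ t^{εₙ} gₙ`. -/
def hnnProd (t g₀ : Γ) (w : List (ℤ × Γ)) : Γ :=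
  g₀ * (w.map fun p => t ^ p.1 * p.2).prod

/-- `Γ` is the HNN extension of its subgroup `A` relative to the isomorphism
`φ : Cm → Cp`, `φ(c) = t⁻¹ c t`, with stable letter `t`. -/
def IsHNN (A Cm Cp : Subgroup Γ) (t : Γ) : Prop :=
  Cm ≤ A ∧ Cp ≤ A ∧ (∀ c : Γ, c ∈ Cm ↔ t⁻¹ * c * t ∈ Cp) ∧
    Subgroup.closure ((A : Set Γ) ∪ {t}) = ⊤ ∧
    ∀ g₀ w, HNNReducedWord A Cm Cp g₀ w → w ≠ [] → hnnProd t g₀ w ≠ 1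

/-- `g` is cyclically reduced: `g ∈ A` (length 1), or `g` has a reduced form
`g₁ t^{ε₁} g₂ ⋯ gₙ t^{εₙ} gₙ₊₁` with `gₙ₊₁ = 1` and either `n = 1` or
`t^{εₙ} g₁ t^{ε₁}` is not a pinch. -/
def HNNCyclicallyReduced (A Cm Cp : Subgroup Γ) (t g : Γ) : Prop :=
  g ∈ A ∨
    ∃ g₀ w, HNNReducedWord A Cm Cp g₀ w ∧ hnnProd t g₀ w = g ∧
      ∃ p q, w.head? = some q ∧ w.getLast? = some p ∧ p.2 = 1 ∧
        (w.length = 1 ∨ ¬(q.1 = -p.1 ∧ g₀ ∈ toCsub Cm Cp p.1))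

/-!
If a reduced form of `z` ends in `t^ε gₙ` and `z` commutes with `A`, then `C_ε = A`: for
`y ∈ A \ C_ε`, splicing `y` between the reduced forms of `z` and `z⁻¹` gives a reduced word for
`z a z⁻¹ = a` with `a ∈ A`, which Britton's lemma forbids. For central `z = g₀ t^{ε₁} ⋯ t^{εₙ} gₙ`,
applying this to `z` and `z⁻¹` gives `C_{εₙ} = C_{-ε₁} = A`; as one of `C_{±1}` is proper,
`εₙ = -ε₁`, so both ends of `t^{-ε₁} z t^{ε₁} = z` pinch and its reduced form is shorter. Hence
`z ∈ A`, and Britton's lemma for `t⁻¹ z t z⁻¹ = 1` gives `z ∈ C_{-1}`.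
-/

section HNN

variable {A Cm Cp : Subgroup Γ} {t g₀ x : Γ} {u v w : List (ℤ × Γ)}

@[simp]
lemma toCsub_one (Cm Cp : Subgroup Γ) : toCsub Cm Cp 1 = Cp := if_pos rfl

@[simp]
lemma toCsub_neg_one (Cm Cp : Subgroup Γ) : toCsub Cm Cp (-1) = Cm := if_neg (by decide)

lemma toCsub_le (hCm : Cm ≤ A) (hCp : Cp ≤ A) (ε : ℤ) : toCsub Cm Cp ε ≤ A := by
  unfold toCsub; split <;> assumption

lemma eq_of_toCsub_eq_of_toCsub_eq (hproper : Cm ≠ A ∨ Cp ≠ A) {ε ε' : ℤ}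
    (hε : ε = 1 ∨ ε = -1) (hε' : ε' = 1 ∨ ε' = -1)
    (h : toCsub Cm Cp ε = A) (h' : toCsub Cm Cp ε' = A) : ε = ε' := by
  rcases hε with rfl | rfl <;> rcases hε' with rfl | rfl <;> simp_all

@[simp]
lemma hnnProd_nil (t g₀ : Γ) : hnnProd t g₀ [] = g₀ := by simp [hnnProd]

lemma hnnProd_cons (t g₀ : Γ) (p : ℤ × Γ) (w : List (ℤ × Γ)) :
    hnnProd t g₀ (p :: w) = g₀ * t ^ p.1 * hnnProd t p.2 w := by
  simp [hnnProd, mul_assoc]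

lemma hnnProd_append (t g₀ x : Γ) (u v : List (ℤ × Γ)) :
    hnnProd t g₀ (u ++ v) = hnnProd t g₀ u * x⁻¹ * hnnProd t x v := by
  simp [hnnProd, mul_assoc]

lemma hnnProd_append_singleton (t g₀ : Γ) (u : List (ℤ × Γ)) (p : ℤ × Γ) :
    hnnProd t g₀ (u ++ [p]) = hnnProd t g₀ u * t ^ p.1 * p.2 := by
  simp [hnnProd, mul_assoc]

lemma hnnProd_mul_left (t a g₀ : Γ) (w : List (ℤ × Γ)) :
    hnnProd t (a * g₀) w = a * hnnProd t g₀ w := by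
  simp [hnnProd, mul_assoc]

namespace HNNReducedWord

lemma head_mem (h : HNNReducedWord A Cm Cp g₀ w) : g₀ ∈ A := h.1

lemma snd_mem (h : HNNReducedWord A Cm Cp g₀ w) {p : ℤ × Γ} (hp : p ∈ w) : p.2 ∈ A :=
  (h.2.1 p hp).2

lemma sign_of_mem (h : HNNReducedWord A Cm Cp g₀ w) {p : ℤ × Γ} (hp : p ∈ w) :
    p.1 = 1 ∨ p.1 = -1 :=
  (h.2.1 p hp).1

lemma nil (hg₀ : g₀ ∈ A) : HNNReducedWord A Cm Cp g₀ [] := ⟨hg₀, by simp, List.isChain_nil⟩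

lemma singleton (hg₀ : g₀ ∈ A) {ε : ℤ} (hε : ε = 1 ∨ ε = -1) (hx : x ∈ A) :
    HNNReducedWord A Cm Cp g₀ [(ε, x)] :=
  ⟨hg₀, by simpa using ⟨hε, hx⟩, List.isChain_singleton _⟩

lemma append (hu : HNNReducedWord A Cm Cp g₀ u) (hv : HNNReducedWord A Cm Cp x v)
    (hjoin : ∀ p ∈ u.getLast?, ∀ q ∈ v.head?, q.1 = -p.1 → p.2 ∉ toCsub Cm Cp p.1) :
    HNNReducedWord A Cm Cp g₀ (u ++ v) :=
  ⟨hu.1, fun p hp => (List.mem_append.1 hp).elim (hu.2.1 p) (hv.2.1 p),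
    List.isChain_append.2 ⟨hu.2.2, hv.2.2, hjoin⟩⟩

lemma of_append_left (h : HNNReducedWord A Cm Cp g₀ (u ++ v)) : HNNReducedWord A Cm Cp g₀ u :=
  ⟨h.1, fun p hp => h.2.1 p (List.mem_append_left _ hp), (List.isChain_append.1 h.2.2).1⟩

lemma tail {p : ℤ × Γ} (h : HNNReducedWord A Cm Cp g₀ (p :: w)) :
    HNNReducedWord A Cm Cp p.2 w :=
  ⟨h.snd_mem List.mem_cons_self, fun q hq => h.2.1 q (List.mem_cons_of_mem _ hq), h.2.2.tail⟩

lemma replace_head (h : HNNReducedWord A Cm Cp g₀ w) (hx : x ∈ A) : HNNReducedWord A Cm Cp x w :=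
  ⟨hx, h.2⟩

lemma replace_last {p : ℤ × Γ} (h : HNNReducedWord A Cm Cp g₀ (u ++ [p])) (hx : x ∈ A) :
    HNNReducedWord A Cm Cp g₀ (u ++ [(p.1, x)]) := by
  refine h.of_append_left.append (singleton (one_mem A) (h.sign_of_mem (by simp)) hx) ?_
  intro q hq r hr
  obtain rfl : r = (p.1, x) := by simpa using hr.symm
  exact (List.isChain_append.1 h.2.2).2.2 q hq p rfl

lemma exists_reduced_mul (h : HNNReducedWord A Cm Cp g₀ w) {a : Γ} (ha : a ∈ A) :
    ∃ g₀' w', HNNReducedWord A Cm Cp g₀' w' ∧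
      hnnProd t g₀' w' = hnnProd t g₀ w * a ∧ w'.length = w.length := by
  rcases w.eq_nil_or_concat' with rfl | ⟨u, p, rfl⟩
  · exact ⟨g₀ * a, [], nil (mul_mem h.1 ha), by simp, rfl⟩
  · refine ⟨g₀, u ++ [(p.1, p.2 * a)], h.replace_last (mul_mem (h.snd_mem (by simp)) ha), ?_,
      by simp⟩
    simp [hnnProd_append_singleton, mul_assoc]

lemma exists_reduced_inv (h : HNNReducedWord A Cm Cp g₀ w) :
    ∃ g₀' w', HNNReducedWord A Cm Cp g₀' w' ∧ hnnProd t g₀' w' = (hnnProd t g₀ w)⁻¹ ∧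
      w'.getLast? = w.head?.map fun q => (-q.1, g₀⁻¹) := by
  induction w generalizing g₀ with
  | nil => exact ⟨g₀⁻¹, [], nil (inv_mem h.1), by simp, rfl⟩
  | cons p w ih =>
    obtain ⟨g₀', w', hred, hprod, hlast⟩ := ih h.tail
    have hp := h.sign_of_mem List.mem_cons_self
    refine ⟨g₀', w' ++ [(-p.1, g₀⁻¹)], hred.append (singleton (one_mem A) ?_ (inv_mem h.1)) ?_,
      ?_, by simp⟩
    · omega
    · intro r hr q hq hqr
      cases w with
      | nil => simp at hlast; simp [hlast] at hr
      | cons s w =>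
        obtain rfl : r = (-s.1, p.2⁻¹) := by simpa [hlast] using hr.symm
        obtain rfl : q = (-p.1, g₀⁻¹) := by simpa using hq.symm
        have hnot := (List.isChain_cons_cons.1 h.2.2).1 (by simp at hqr; omega)
        rwa [show -s.1 = p.1 by simp at hqr; omega, inv_mem_iff]
    · rw [hnnProd_append_singleton, hprod, hnnProd_cons]
      group

end HNNReducedWord

namespace IsHNN

open HNNReducedWord

lemma conj_mem (hH : IsHNN A Cm Cp t) {ε : ℤ} (hε : ε = 1 ∨ ε = -1) {c : Γ}
    (hc : c ∈ toCsub Cm Cp ε) : t ^ ε * c * t ^ (-ε) ∈ A := by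
  obtain ⟨hCm, hCp, hφ, -, -⟩ := hH
  rcases hε with rfl | rfl
  · refine hCm ((hφ _).2 ?_)
    simpa [mul_assoc] using hc
  · simpa using hCp ((hφ c).1 (by simpa using hc))

lemma hnnProd_notMem (hH : IsHNN A Cm Cp t) (h : HNNReducedWord A Cm Cp g₀ w) (hw : w ≠ []) :
    hnnProd t g₀ w ∉ A := by
  intro hmem
  obtain ⟨u, p, rfl⟩ := w.eq_nil_or_concat'.resolve_left hw
  refine hH.2.2.2.2 g₀ _ (h.replace_last (mul_mem (h.snd_mem (p := p) (by simp)) (inv_mem hmem)))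
    (by simp) ?_
  rw [hnnProd_append_singleton, ← mul_assoc]
  exact mul_inv_eq_one.2 (hnnProd_append_singleton t g₀ u p).symm

lemma mem_of_conj_mem (hH : IsHNN A Cm Cp t) {a : Γ} (ha : a ∈ A) (hta : t⁻¹ * a * t ∈ A) :
    a ∈ Cm := by
  by_contra ha'
  have hred : HNNReducedWord A Cm Cp 1 ([(-1, a)] ++ [(1, 1)]) :=
    (singleton (one_mem A) (Or.inr rfl) ha).append
      (singleton (one_mem A) (Or.inl rfl) (one_mem A)) (by simpa using ha')
  exact hH.hnnProd_notMem hred (by simp) (by simpa [hnnProd, mul_assoc] using hta)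

lemma exists_reduced_mul_zpow (hH : IsHNN A Cm Cp t) (h : HNNReducedWord A Cm Cp g₀ w)
    {ε : ℤ} (hε : ε = 1 ∨ ε = -1) :
    ∃ g₀' w', HNNReducedWord A Cm Cp g₀' w' ∧ hnnProd t g₀' w' = hnnProd t g₀ w * t ^ ε := by
  by_cases hpinch : ∃ u p, w = u ++ [p] ∧ ε = -p.1 ∧ p.2 ∈ toCsub Cm Cp p.1
  · obtain ⟨u, p, rfl, rfl, hp⟩ := hpinch
    obtain ⟨g₀', w', hred, hprod, -⟩ :=
      h.of_append_left.exists_reduced_mul (t := t) (hH.conj_mem (h.sign_of_mem (by simp)) hp)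
    exact ⟨g₀', w', hred, by rw [hprod, hnnProd_append_singleton]; group⟩
  · refine ⟨g₀, w ++ [(ε, 1)], h.append (singleton (one_mem A) hε (one_mem A)) ?_,
      by simp [hnnProd_append_singleton]⟩
    intro p hp q hq hqp hmem
    obtain rfl : q = (ε, 1) := by simpa using hq.symm
    obtain ⟨u, rfl⟩ := List.getLast?_eq_some_iff.1 hp
    exact hpinch ⟨u, p, rfl, hqp, hmem⟩

lemma exists_reduced (hH : IsHNN A Cm Cp t) (g : Γ) :
    ∃ g₀ w, HNNReducedWord A Cm Cp g₀ w ∧ hnnProd t g₀ w = g := by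
  have hg : g ∈ Subgroup.closure ((A : Set Γ) ∪ {t}) := hH.2.2.2.1 ▸ Subgroup.mem_top g
  induction hg using Subgroup.closure_induction_right with
  | one => exact ⟨1, [], nil (one_mem A), by simp⟩
  | mul_right x _ y hy ih =>
    obtain ⟨g₀, w, h, rfl⟩ := ih
    rcases hy with hy | rfl
    · obtain ⟨g₀', w', h', hprod, -⟩ := h.exists_reduced_mul hy
      exact ⟨g₀', w', h', hprod⟩
    · simpa using hH.exists_reduced_mul_zpow h (ε := 1) (Or.inl rfl)
  | mul_inv_cancel x _ y hy ih =>
    obtain ⟨g₀, w, h, rfl⟩ := ih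
    rcases hy with hy | rfl
    · obtain ⟨g₀', w', h', hprod, -⟩ := h.exists_reduced_mul (inv_mem hy)
      exact ⟨g₀', w', h', hprod⟩
    · simpa using hH.exists_reduced_mul_zpow h (ε := -1) (Or.inr rfl)

lemma toCsub_eq_of_getLast (hH : IsHNN A Cm Cp t) {p : ℤ × Γ}
    (h : HNNReducedWord A Cm Cp g₀ (u ++ [p]))
    (hz : hnnProd t g₀ (u ++ [p]) ∈ Subgroup.centralizer A) : toCsub Cm Cp p.1 = A := by
  by_contra hne
  obtain ⟨y, hyA, hyC⟩ := SetLike.exists_of_lt ((toCsub_le hH.1 hH.2.1 _).lt_of_ne hne)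
  obtain ⟨g₀', w', hinv, hprod, -⟩ := h.exists_reduced_inv (t := t)
  have ha : p.2⁻¹ * y * g₀'⁻¹ ∈ A :=
    mul_mem (mul_mem (inv_mem (h.snd_mem (by simp))) hyA) (inv_mem hinv.1)
  have hred : HNNReducedWord A Cm Cp g₀ (u ++ [(p.1, y)] ++ w') :=
    (h.replace_last hyA).append hinv fun q hq _ _ _ => by
      obtain rfl : q = (p.1, y) := by simpa using hq.symm
      exact hyC
  have hconj : hnnProd t g₀ (u ++ [(p.1, y)] ++ w') =
      hnnProd t g₀ (u ++ [p]) * (p.2⁻¹ * y * g₀'⁻¹) * (hnnProd t g₀ (u ++ [p]))⁻¹ := by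
    rw [hnnProd_append _ _ g₀', hprod, hnnProd_append_singleton, hnnProd_append_singleton]
    group
  rw [← Subgroup.mem_centralizer_iff.1 hz _ ha, mul_inv_cancel_right] at hconj
  exact hH.hnnProd_notMem hred (by simp) (hconj ▸ ha)

lemma toCsub_neg_eq_of_head (hH : IsHNN A Cm Cp t) {q : ℤ × Γ}
    (h : HNNReducedWord A Cm Cp g₀ (q :: w))
    (hz : hnnProd t g₀ (q :: w) ∈ Subgroup.centralizer A) : toCsub Cm Cp (-q.1) = A := by
  obtain ⟨g₀', w', hinv, hprod, hlast⟩ := h.exists_reduced_inv (t := t)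
  obtain ⟨u, rfl⟩ := List.getLast?_eq_some_iff.1 (by simpa using hlast)
  exact hH.toCsub_eq_of_getLast hinv (hprod ▸ inv_mem hz)

lemma exists_reduced_zpow_conj (hH : IsHNN A Cm Cp t) {p q : ℤ × Γ}
    (h : HNNReducedWord A Cm Cp g₀ (q :: (u ++ [p]))) (hpq : p.1 = -q.1)
    (hg₀ : g₀ ∈ toCsub Cm Cp (-q.1)) (hp : p.2 ∈ toCsub Cm Cp p.1) :
    ∃ g₀' w', HNNReducedWord A Cm Cp g₀' w' ∧
      hnnProd t g₀' w' = t ^ (-q.1) * hnnProd t g₀ (q :: (u ++ [p])) * t ^ q.1 ∧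
      w'.length = u.length := by
  have hq := h.sign_of_mem List.mem_cons_self
  have hc : t ^ (-q.1) * g₀ * t ^ q.1 ∈ A := by
    simpa using hH.conj_mem (ε := -q.1) (by omega) hg₀
  obtain ⟨g₀', w', hred, hprod, hlen⟩ :=
    (h.tail.of_append_left.replace_head (mul_mem hc h.tail.head_mem)).exists_reduced_mul (t := t)
      (hH.conj_mem (h.sign_of_mem (by simp)) hp)
  refine ⟨g₀', w', hred, ?_, hlen⟩
  rw [hprod, hnnProd_mul_left, hnnProd_cons, hnnProd_append_singleton, hpq]
  group

lemma hnnProd_snd_mem_center (hH : IsHNN A Cm Cp t) (hproper : Cm ≠ A ∨ Cp ≠ A)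
    (h : HNNReducedWord A Cm Cp g₀ w) (hz : hnnProd t g₀ w ∈ Subgroup.center Γ) :
    hnnProd t g₀ w ∈ A := by
  induction hn : w.length using Nat.strong_induction_on generalizing g₀ w with
  | _ n ih =>
  rcases w with _ | ⟨q, w⟩
  · simpa using h.head_mem
  have hzA := Subgroup.center_le_centralizer (A : Set Γ) hz
  obtain ⟨u, p, hw⟩ := (q :: w).eq_nil_or_concat'.resolve_left (by simp)
  have h' : HNNReducedWord A Cm Cp g₀ (u ++ [p]) := hw ▸ h
  have hlast := hH.toCsub_eq_of_getLast h' (hw ▸ hzA)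
  have hhead := hH.toCsub_neg_eq_of_head h hzA
  have hq := h.sign_of_mem List.mem_cons_self
  have hpq : p.1 = -q.1 :=
    eq_of_toCsub_eq_of_toCsub_eq hproper (h'.sign_of_mem (by simp)) (by omega) hlast hhead
  rcases u with _ | ⟨q', u⟩
  · obtain ⟨rfl, -⟩ : q = p ∧ w = [] := by simpa using hw
    omega
  obtain ⟨rfl, rfl⟩ : q' = q ∧ w = u ++ [p] := by simpa [eq_comm] using hw
  obtain ⟨g₀', w', hred, hprod, hlen⟩ := hH.exists_reduced_zpow_conj h hpq
    (hhead ▸ h.head_mem) (hlast ▸ h'.snd_mem (by simp))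
  rw [Subgroup.mem_center_iff.1 hz, mul_assoc, ← zpow_add, neg_add_cancel, zpow_zero,
    mul_one] at hprod
  exact hprod ▸ ih _ (by simp at hn hlen; omega) hred (hprod ▸ hz) hlen

lemma mem_center_of_commute (hH : IsHNN A Cm Cp t) {g : Γ} (hA : ∀ a ∈ A, g * a = a * g)
    (ht : t⁻¹ * g * t = g) : g ∈ Subgroup.center Γ := by
  have hle : Subgroup.closure ((A : Set Γ) ∪ {t}) ≤ Subgroup.centralizer {g} := by
    rw [Subgroup.closure_le]
    rintro x (hx | rfl) <;> rw [SetLike.mem_coe, Subgroup.mem_centralizer_singleton_iff]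
    · exact (hA x hx).symm
    · calc x * g = x * (x⁻¹ * g * x) := by rw [ht]
        _ = g * x := by group
  exact Subgroup.mem_center_iff.2 fun x =>
    Subgroup.mem_centralizer_singleton_iff.1 (hle (hH.2.2.2.1 ▸ Subgroup.mem_top x))

end IsHNN

end HNN

/-- Center of an HNN extension, case (i): if `C_{-1}` or `C_{+1}` is a proper
subgroup of `A`, the center of `Γ` is `Z(A) ∩ Fix φ`, where
`Fix φ = {c ∈ C_{-1} ∩ C_{+1} | φ(c) = t⁻¹ c t = c}`. -/
theorem hnn_center_proper (A Cm Cp : Subgroup Γ) (t : Γ)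
    (hH : IsHNN A Cm Cp t) (hproper : Cm ≠ A ∨ Cp ≠ A) :
    (Subgroup.center Γ : Set Γ) =
      {g : Γ | (g ∈ A ∧ ∀ a ∈ A, g * a = a * g) ∧
        g ∈ Cm ∧ g ∈ Cp ∧ t⁻¹ * g * t = g} := by
  ext g
  refine ⟨fun hg => ?_, fun ⟨⟨_, hA⟩, _, _, ht⟩ => hH.mem_center_of_commute hA ht⟩
  have hgA : g ∈ A := by
    obtain ⟨g₀, w, h, rfl⟩ := hH.exists_reduced g
    exact hH.hnnProd_snd_mem_center hproper h hg
  have ht : t⁻¹ * g * t = g := by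
    rw [mul_assoc, ← Subgroup.mem_center_iff.1 hg t, inv_mul_cancel_left]
  have hgCm : g ∈ Cm := hH.mem_of_conj_mem hgA (by rwa [ht])
  exact ⟨⟨hgA, fun a _ => (Subgroup.mem_center_iff.1 hg a).symm⟩, hgCm,
    ht ▸ (hH.2.2.1 g).1 hgCm, ht⟩
end
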